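/- In the WWSP reduction with vertex weights w_v = [v = t], horizon H = h, delay Δ = h, and forbidden set F = {s,t}: an allocation Λ with P^Λ ∩ F = ∅ achieves weighted burned value 0 if and only if the delayed arrival time of t under Λ is at least h, which holds if and only if d_{G\P^Λ}(s,t) ≥ h. -/

import Mathlib

open scoped ENNReal

/-- `l` is a directed path from `u` to `v` along arc relation `A`. -/
def IsPathFrom {V : Type*} (A : V → V → Prop) (u v : V) (l : List V) : Prop :=
  l.head? = some u ∧ l.getLast? = some v ∧ l.Chain' A

/-- Total cost of a path: sum of arc costs over consecutive pairs. -/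
def pathCost {V : Type*} (c : V → V → ℝ) (l : List V) : ℝ :=
  ((l.zip l.tail).map fun p => c p.1 p.2).sum

/-- Shortest-path distance from `u` to `v` (infimum of path costs, `⊤` if unreachable). -/
noncomputable def gdist {V : Type*} (A : V → V → Prop) (c : V → V → ℝ) (u v : V) : ℝ≥0∞ :=
  ⨅ l : {l : List V // IsPathFrom A u v l}, ENNReal.ofReal (pathCost c l)

open Classical in
/-- Arc costs after protecting the vertices of `P`: every outgoing arc of a
protected vertex is delayed by `Δ`. -/
noncomputable def delCost {V : Type*} (c : V → V → ℝ) (P : Set V) (Δ : ℝ) : V → V → ℝ :=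
  fun u v => c u v + (if u ∈ P then Δ else 0)

/-!
A path of `G` that leaves a protected vertex pays the delay `h` on that arc, so under the delayed
costs it has length at least `h`. Since `t` is not protected, every other `s`–`t` path avoids `P`
altogether; it is then a path of `G \ P`, and on it the delayed costs are the original ones.
Hence the delayed distance and `d_{G\P}(s,t)` agree below the threshold `h`.
-/

section PathCost

variable {V : Type*}

@[simp]
lemma pathCost_cons_cons (c : V → V → ℝ) (a b : V) (l : List V) :
    pathCost c (a :: b :: l) = c a b + pathCost c (b :: l) := by
  simp [pathCost]

lemma pathCost_congr_of_isChain {R : V → V → Prop} {c c' : V → V → ℝ}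
    (hcc' : ∀ a b, R a b → c a b = c' a b) {l : List V} (hl : l.IsChain R) :
    pathCost c l = pathCost c' l := by
  induction hl with
  | nil | singleton => rfl
  | cons_cons hab _ ih => rw [pathCost_cons_cons, pathCost_cons_cons, hcc' _ _ hab, ih]

lemma pathCost_nonneg_of_isChain {R : V → V → Prop} {c : V → V → ℝ}
    (hc : ∀ a b, R a b → 0 ≤ c a b) {l : List V} (hl : l.IsChain R) : 0 ≤ pathCost c l := by
  induction hl with
  | nil | singleton => rfl
  | cons_cons hab _ ih => rw [pathCost_cons_cons]; exact add_nonneg (hc _ _ hab) ih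

end PathCost

section Delay

variable {V : Type*} {A : V → V → Prop} {c : V → V → ℝ} {P : Set V} {Δ : ℝ}

def avoiding (A : V → V → Prop) (P : Set V) (a b : V) : Prop :=
  A a b ∧ a ∉ P ∧ b ∉ P

lemma delCost_eq_of_notMem {a : V} (ha : a ∉ P) (b : V) : delCost c P Δ a b = c a b := by
  simp [delCost, ha]

lemma delCost_nonneg (hc : ∀ a b, A a b → 0 ≤ c a b) (hΔ : 0 ≤ Δ) {a b : V} (hab : A a b) :
    0 ≤ delCost c P Δ a b := by
  unfold delCost
  split_ifs <;> linarith [hc a b hab]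

lemma le_pathCost_delCost_or_forall_notMem (hc : ∀ a b, A a b → 0 ≤ c a b) (hΔ : 0 ≤ Δ)
    {l : List V} (hl : l.IsChain A) {v : V} (hlast : l.getLast? = some v) (hv : v ∉ P) :
    Δ ≤ pathCost (delCost c P Δ) l ∨ ∀ x ∈ l, x ∉ P := by
  induction hl with
  | nil => simp
  | singleton a =>
    simp only [List.getLast?_singleton, Option.some.injEq] at hlast
    exact .inr (by simpa [hlast] using hv)
  | @cons_cons a b l hab hbl ih =>
    rw [List.getLast?_cons_cons] at hlast
    have hrest : 0 ≤ pathCost (delCost c P Δ) (b :: l) :=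
      pathCost_nonneg_of_isChain (fun _ _ => delCost_nonneg hc hΔ) hbl
    rw [pathCost_cons_cons]
    by_cases ha : a ∈ P
    · left
      have hdelay : delCost c P Δ a b = c a b + Δ := by simp [delCost, ha]
      linarith [hc a b hab]
    · rcases ih hlast with hΔl | hall
      · exact .inl (by linarith [delCost_nonneg (P := P) hc hΔ hab])
      · exact .inr (List.forall_mem_cons.2 ⟨ha, hall⟩)

lemma gdist_delCost_le_gdist_avoiding (u v : V) :
    gdist A (delCost c P Δ) u v ≤ gdist (avoiding A P) c u v := by
  refine le_iInf fun ⟨l, hhead, hlast, hl⟩ =>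
    (iInf_le _ ⟨l, hhead, hlast, hl.imp fun _ _ => And.left⟩).trans_eq ?_
  rw [pathCost_congr_of_isChain (fun a b hab => delCost_eq_of_notMem hab.2.1 b) hl]

lemma min_le_gdist_delCost (hc : ∀ a b, A a b → 0 ≤ c a b) (hΔ : 0 ≤ Δ) (u : V) {v : V}
    (hv : v ∉ P) :
    min (ENNReal.ofReal Δ) (gdist (avoiding A P) c u v) ≤ gdist A (delCost c P Δ) u v := by
  refine le_iInf fun ⟨l, hhead, hlast, hl⟩ => ?_
  rcases le_pathCost_delCost_or_forall_notMem hc hΔ hl hlast hv with hΔl | hall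
  · exact min_le_of_left_le (ENNReal.ofReal_le_ofReal hΔl)
  · have hl' : l.IsChain (avoiding A P) :=
      hl.imp_of_mem_imp fun a b ha hb hab => ⟨hab, hall a ha, hall b hb⟩
    refine min_le_of_right_le ((iInf_le _ ⟨l, hhead, hlast, hl'⟩).trans_eq ?_)
    rw [pathCost_congr_of_isChain (fun a b hab => delCost_eq_of_notMem hab.2.1 b) hl']

end Delay

open Classical in
theorem wwsp_reduction_equivalences_general {V : Type*} [Fintype V] (A : V → V → Prop)
    (t : V → V → ℝ) (hpos : ∀ u v, A u v → 0 < t u v)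
    (s tv : V) (h : ℝ) (hh : 0 < h)
    (P : Set V) (ht : tv ∉ P) :
    ((∑ v : V, (if v = tv then (1 : ℝ) else 0) *
        (if gdist A (delCost t P h) s v < ENNReal.ofReal h then 1 else 0)) = 0 ↔
      ENNReal.ofReal h ≤ gdist A (delCost t P h) s tv) ∧
    (ENNReal.ofReal h ≤ gdist A (delCost t P h) s tv ↔
      ENNReal.ofReal h ≤ gdist (fun u v => A u v ∧ u ∉ P ∧ v ∉ P) t s tv) := by
  constructor
  · rw [Finset.sum_eq_single tv (fun v _ hv => by simp [hv]) (by simp)]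
    simp
  · have hc : ∀ u v, A u v → 0 ≤ t u v := fun u v huv => (hpos u v huv).le
    exact ⟨fun hd => hd.trans (gdist_delCost_le_gdist_avoiding s tv),
      fun hd => (le_min le_rfl hd).trans (min_le_gdist_delCost hc hh.le s ht)⟩

open Classical in
/-- in the WWSP reduction with weights `w_v = [v = t]`, horizon
`H = h`, delay `Δ = h` and forbidden set `{s, t}`, an allocation protecting
`P ⊆ V \ {s,t}` has weighted burned value `0` iff the delayed arrival time at `t`
is at least `h`, iff `d_{G\P}(s,t) ≥ h`. -/
theorem wwsp_reduction_equivalences {V : Type*} [Fintype V] (A : V → V → Prop)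
    (t : V → V → ℝ) (hpos : ∀ u v, A u v → 0 < t u v)
    (s tv : V) (hstv : s ≠ tv) (h : ℝ) (hh : 0 < h)
    (P : Set V) (hs : s ∉ P) (ht : tv ∉ P) :
    ((∑ v : V, (if v = tv then (1 : ℝ) else 0) *
        (if gdist A (delCost t P h) s v < ENNReal.ofReal h then 1 else 0)) = 0 ↔
      ENNReal.ofReal h ≤ gdist A (delCost t P h) s tv) ∧
    (ENNReal.ofReal h ≤ gdist A (delCost t P h) s tv ↔
      ENNReal.ofReal h ≤ gdist (fun u v => A u v ∧ u ∉ P ∧ v ∉ P) t s tv) :=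
  wwsp_reduction_equivalences_general A t hpos s tv h hh P ht
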